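/- arXiv:2401.09026 — 2 statements merged into one kernel-verified Lean document; each statement's English description precedes it below -/
import Mathlib

section
/- Let C ⊆ ℝⁿ be a nonempty closed convex set. If dom σ_C is closed and σ_C is continuous relative to dom σ_C, then C is approximately M-decomposable. -/
/-!
If `C` were not approximately M-decomposable, there would be points `x k ∈ C` at distance `> ε`
from `C_{R k}` with `R k → ∞`. The unit normals `d k` of the hyperplanes separating them lie in
`(rec C)°`, which is contained in `dom σ_C` because `dom σ_C` is a closed convex cone whose polar
lies in `rec C`. Pass to a subsequence with `d k → d₀ ∈ dom σ_C`: for `y ∈ C` and `k` large,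
`⟪d k, y⟫ + ε ≤ ⟪d k, x k⟫ ≤ σ_C(d k)`, so continuity of `σ_C` gives `⟪d₀, y⟫ + ε ≤ σ_C(d₀)`
for every `y ∈ C`, which is absurd.
-/

open scoped InnerProductSpace Pointwise ENNReal
open Metric Filter

/-- The support function `σ_C(d) = sup_{x ∈ C} ⟪d, x⟫` of a set `C ⊆ ℝⁿ`,
with values in the extended reals. -/
noncomputable def suppFun {n : ℕ} (C : Set (EuclideanSpace ℝ (Fin n)))
    (d : EuclideanSpace ℝ (Fin n)) : EReal :=
  ⨆ x ∈ C, ((⟪d, x⟫_ℝ : ℝ) : EReal)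

/-- The effective domain `dom σ_C = {d : σ_C(d) < +∞}` of the support function. -/
def suppDom {n : ℕ} (C : Set (EuclideanSpace ℝ (Fin n))) :
    Set (EuclideanSpace ℝ (Fin n)) :=
  {d | suppFun C d < ⊤}

/-- The recession cone `rec C` of a set `C`. -/
def recCone {n : ℕ} (C : Set (EuclideanSpace ℝ (Fin n))) :
    Set (EuclideanSpace ℝ (Fin n)) :=
  {y | ∀ x ∈ C, ∀ t : ℝ, 0 ≤ t → x + t • y ∈ C}

/-- The truncation `C_r = (C ∩ rB) + rec C` of `C` of radius `r`. -/
def trunc {n : ℕ} (C : Set (EuclideanSpace ℝ (Fin n))) (r : ℝ) :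
    Set (EuclideanSpace ℝ (Fin n)) :=
  (C ∩ closedBall 0 r) + recCone C

/-- `C` is approximately M-decomposable: for every `ε > 0` there is `r > 0`
with `C ⊆ C_r + εB`. -/
def ApproxMDecomposable {n : ℕ} (C : Set (EuclideanSpace ℝ (Fin n))) : Prop :=
  ∀ ε > (0 : ℝ), ∃ r > (0 : ℝ), C ⊆ trunc C r + closedBall 0 ε

/-- `C` is M-decomposable: `C = M + rec C` for some compact convex `M`. -/
def MDecomposable {n : ℕ} (C : Set (EuclideanSpace ℝ (Fin n))) : Prop :=
  ∃ M : Set (EuclideanSpace ℝ (Fin n)), IsCompact M ∧ Convex ℝ M ∧ C = M + recCone C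

/-- `C` is hyperbolic: `C ⊆ M + rec C` for some compact convex `M`. -/
def Hyperbolic {n : ℕ} (C : Set (EuclideanSpace ℝ (Fin n))) : Prop :=
  ∃ M : Set (EuclideanSpace ℝ (Fin n)), IsCompact M ∧ Convex ℝ M ∧ C ⊆ M + recCone C

/-- The polar cone `K° = {d : ⟪d, x⟫ ≤ 0 for all x ∈ K}` of a cone `K`. -/
def polarCone {n : ℕ} (K : Set (EuclideanSpace ℝ (Fin n))) :
    Set (EuclideanSpace ℝ (Fin n)) :=
  {d | ∀ x ∈ K, ⟪d, x⟫_ℝ ≤ 0}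

section InnerProductSpace

variable {E : Type*} [NormedAddCommGroup E] [InnerProductSpace ℝ E]

theorem inner_nonpos_of_forall_inner_add_smul_le {d w z : E} {M : ℝ}
    (h : ∀ t : ℝ, 0 ≤ t → ⟪d, w + t • z⟫_ℝ ≤ M) : ⟪d, z⟫_ℝ ≤ 0 := by
  by_contra! hz
  obtain ⟨N, hN⟩ := exists_nat_gt ((M - ⟪d, w⟫_ℝ) / ⟪d, z⟫_ℝ)
  have hwN := h N N.cast_nonneg
  rw [inner_add_right, real_inner_smul_right] at hwN
  rw [div_lt_iff₀ hz] at hN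
  linarith

/-- The unit vector pointing from the nearest point of `K` to `x` separates `x` from `K` with
margin `ε`. -/
theorem exists_norm_eq_one_forall_inner_add_le_of_notMem_add_closedBall {K : Set E} {x : E}
    {ε : ℝ} (hK : K.Nonempty) (hKc : IsComplete K) (hKconv : Convex ℝ K) (hε : 0 ≤ ε)
    (hx : x ∉ K + closedBall 0 ε) : ∃ d : E, ‖d‖ = 1 ∧ ∀ w ∈ K, ⟪d, w⟫_ℝ + ε ≤ ⟪d, x⟫_ℝ := by
  obtain ⟨p, hpK, hp⟩ := exists_norm_eq_iInf_of_complete_convex hK hKc hKconv x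
  have hobtuse := (norm_eq_iInf_iff_real_inner_le_zero hKconv hpK).1 hp
  set v := x - p
  have hεv : ε < ‖v‖ := by
    by_contra! hv
    exact hx ⟨p, hpK, v, mem_closedBall_zero_iff.2 hv, add_sub_cancel p x⟩
  have hv : 0 < ‖v‖ := hε.trans_lt hεv
  refine ⟨‖v‖⁻¹ • v, by rw [norm_smul, norm_inv, norm_norm, inv_mul_cancel₀ hv.ne'], ?_⟩
  intro w hw
  have hvw : ⟪v, w⟫_ℝ + ‖v‖ ^ 2 ≤ ⟪v, x⟫_ℝ := by
    have hvx : ⟪v, x⟫_ℝ = ⟪v, p⟫_ℝ + ‖v‖ ^ 2 := by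
      rw [← real_inner_self_eq_norm_sq, ← inner_add_right, add_sub_cancel]
    have := hobtuse w hw
    rw [inner_sub_right] at this
    linarith
  calc ⟪‖v‖⁻¹ • v, w⟫_ℝ + ε ≤ ‖v‖⁻¹ * (⟪v, w⟫_ℝ + ‖v‖ ^ 2) := by
        rw [real_inner_smul_left, mul_add, sq, inv_mul_cancel_left₀ hv.ne']
        linarith
    _ ≤ ⟪‖v‖⁻¹ • v, x⟫_ℝ := by
        rw [real_inner_smul_left]
        exact mul_le_mul_of_nonneg_left hvw (inv_nonneg.2 hv.le)

end InnerProductSpace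

section SupportFunction

variable {n : ℕ} {C : Set (EuclideanSpace ℝ (Fin n))} {d x : EuclideanSpace ℝ (Fin n)}

theorem le_suppFun (hx : x ∈ C) (d : EuclideanSpace ℝ (Fin n)) :
    ((⟪d, x⟫_ℝ : ℝ) : EReal) ≤ suppFun C d :=
  le_iSup₂ (f := fun x (_ : x ∈ C) => ((⟪d, x⟫_ℝ : ℝ) : EReal)) x hx

theorem mem_suppDom_iff : d ∈ suppDom C ↔ ∃ M : ℝ, ∀ x ∈ C, ⟪d, x⟫_ℝ ≤ M := by
  constructor
  · intro hd
    obtain ⟨M, hσM, -⟩ := EReal.lt_iff_exists_real_btwn.1 hd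
    exact ⟨M, fun x hx => EReal.coe_le_coe_iff.1 ((le_suppFun hx d).trans hσM.le)⟩
  · rintro ⟨M, hM⟩
    exact (iSup₂_le fun x hx => EReal.coe_le_coe_iff.2 (hM x hx)).trans_lt (EReal.coe_lt_top M)

theorem exists_suppFun_lt_inner_add (hne : C.Nonempty) (hd : d ∈ suppDom C) {ε : ℝ}
    (hε : 0 < ε) : ∃ y ∈ C, suppFun C d < ((⟪d, y⟫_ℝ + ε : ℝ) : EReal) := by
  obtain ⟨x, hx⟩ := hne
  set s := (suppFun C d).toReal
  have hσ : suppFun C d = (s : EReal) :=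
    (EReal.coe_toReal hd.ne ((EReal.bot_lt_coe _).trans_le (le_suppFun hx d)).ne').symm
  have hlt : ((s - ε : ℝ) : EReal) < suppFun C d := by
    rw [hσ, EReal.coe_lt_coe_iff]
    linarith
  obtain ⟨y, hy, hlt⟩ := lt_biSup_iff.1 hlt
  refine ⟨y, hy, ?_⟩
  rw [hσ, EReal.coe_lt_coe_iff]
  linarith [EReal.coe_lt_coe_iff.1 hlt]

def suppDomCone (hdcl : IsClosed (suppDom C)) : ProperCone ℝ (EuclideanSpace ℝ (Fin n)) where
  carrier := suppDom C
  add_mem' {d₁ d₂} hd₁ hd₂ := by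
    obtain ⟨M₁, hM₁⟩ := mem_suppDom_iff.1 hd₁
    obtain ⟨M₂, hM₂⟩ := mem_suppDom_iff.1 hd₂
    exact mem_suppDom_iff.2 ⟨M₁ + M₂, fun x hx => by
      rw [inner_add_left]; exact add_le_add (hM₁ x hx) (hM₂ x hx)⟩
  zero_mem' := mem_suppDom_iff.2 ⟨0, fun x _ => by simp⟩
  smul_mem' c {d} hd := by
    obtain ⟨M, hM⟩ := mem_suppDom_iff.1 hd
    exact mem_suppDom_iff.2 ⟨c * M, fun x hx => by
      change ⟪(c : ℝ) • d, x⟫_ℝ ≤ c * M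
      rw [real_inner_smul_left]
      exact mul_le_mul_of_nonneg_left (hM x hx) c.2⟩
  isClosed' := hdcl

end SupportFunction

section RecessionCone

variable {n : ℕ} {C : Set (EuclideanSpace ℝ (Fin n))} {r : ℝ}

theorem zero_mem_recCone : (0 : EuclideanSpace ℝ (Fin n)) ∈ recCone C :=
  fun x hx _ _ => by simpa using hx

theorem smul_mem_recCone {z : EuclideanSpace ℝ (Fin n)} (hz : z ∈ recCone C) {t : ℝ}
    (ht : 0 ≤ t) : t • z ∈ recCone C := fun x hx s hs => by
  rw [smul_smul]
  exact hz x hx (s * t) (mul_nonneg hs ht)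

theorem add_mem_recCone {y z : EuclideanSpace ℝ (Fin n)} (hy : y ∈ recCone C)
    (hz : z ∈ recCone C) : y + z ∈ recCone C := fun x hx t ht => by
  rw [smul_add, ← add_assoc]
  exact hz _ (hy x hx t ht) t ht

theorem convex_recCone : Convex ℝ (recCone C) := fun _ hy _ hz _ _ ha hb _ =>
  add_mem_recCone (smul_mem_recCone hy ha) (smul_mem_recCone hz hb)

theorem isClosed_recCone (hcl : IsClosed C) : IsClosed (recCone C) := by
  have : recCone C = ⋂ x ∈ C, ⋂ t ∈ Set.Ici (0 : ℝ), (fun y => x + t • y) ⁻¹' C := by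
    ext y
    simp only [recCone, Set.mem_iInter, Set.mem_preimage, Set.mem_Ici, Set.mem_ofPred_eq]
  rw [this]
  exact isClosed_biInter fun x _ => isClosed_biInter fun t _ =>
    hcl.preimage (continuous_const.add (continuous_const_smul t))

/-- If `x + t • z ∉ C`, a hyperplane strictly separating it from `C` has a normal `d ∈ dom σ_C`
with `⟪d, z⟫ > 0`. -/
theorem polarCone_suppDom_subset_recCone (hcl : IsClosed C) (hconv : Convex ℝ C) :
    polarCone (suppDom C) ⊆ recCone C := by
  intro z hz x hx t ht
  by_contra hxt
  obtain ⟨f, u, hfC, hfxt⟩ := geometric_hahn_banach_closed_point hconv hcl hxt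
  set d := (InnerProductSpace.toDual ℝ (EuclideanSpace ℝ (Fin n))).symm f
  have hfd : ∀ y, f y = ⟪d, y⟫_ℝ := fun y => (InnerProductSpace.toDual_symm_apply).symm
  have hd : d ∈ suppDom C := mem_suppDom_iff.2 ⟨u, fun y hy => (hfd y ▸ hfC y hy).le⟩
  have hdz := real_inner_comm z d ▸ hz d hd
  have hfx := hfC x hx
  rw [hfd, inner_add_right, real_inner_smul_right] at hfxt
  rw [hfd] at hfx
  nlinarith

/-- Farkas: a direction outside the closed convex cone `dom σ_C` is separated from it by some
`y` with `-y ∈ (dom σ_C)° ⊆ rec C`. -/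
theorem polarCone_recCone_subset_suppDom (hcl : IsClosed C) (hconv : Convex ℝ C)
    (hdcl : IsClosed (suppDom C)) : polarCone (recCone C) ⊆ suppDom C := by
  intro d hd
  by_contra hdom
  obtain ⟨y, hy, hdy⟩ := (suppDomCone hdcl).hyperplane_separation' hdom
  have hrec : -y ∈ recCone C := polarCone_suppDom_subset_recCone hcl hconv fun e he => by
    rw [inner_neg_left, neg_nonpos, real_inner_comm]
    exact hy e he
  have := hd (-y) hrec
  rw [inner_neg_right] at this
  linarith

theorem inter_closedBall_subset_trunc : C ∩ closedBall 0 r ⊆ trunc C r :=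
  Set.subset_add_left _ zero_mem_recCone

theorem add_smul_mem_trunc {w z : EuclideanSpace ℝ (Fin n)} (hw : w ∈ trunc C r)
    (hz : z ∈ recCone C) {t : ℝ} (ht : 0 ≤ t) : w + t • z ∈ trunc C r := by
  obtain ⟨a, ha, b, hb, rfl⟩ := hw
  exact ⟨a, ha, b + t • z, add_mem_recCone hb (smul_mem_recCone hz ht), (add_assoc a b _).symm⟩

theorem isClosed_trunc (hcl : IsClosed C) : IsClosed (trunc C r) :=
  (isClosed_recCone hcl).add_left_of_isCompact ((isCompact_closedBall 0 r).inter_left hcl)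

theorem convex_trunc (hconv : Convex ℝ C) : Convex ℝ (trunc C r) :=
  (hconv.inter (convex_closedBall 0 r)).add convex_recCone

theorem exists_mem_polarCone_recCone_forall_inner_add_le {x : EuclideanSpace ℝ (Fin n)} {ε : ℝ}
    (hcl : IsClosed C) (hconv : Convex ℝ C) (hr : (C ∩ closedBall 0 r).Nonempty) (hε : 0 ≤ ε)
    (hx : x ∉ trunc C r + closedBall 0 ε) :
    ∃ d ∈ polarCone (recCone C), ‖d‖ = 1 ∧
      ∀ y ∈ C ∩ closedBall 0 r, ⟪d, y⟫_ℝ + ε ≤ ⟪d, x⟫_ℝ := by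
  obtain ⟨d, hd1, hdx⟩ := exists_norm_eq_one_forall_inner_add_le_of_notMem_add_closedBall
    (hr.mono inter_closedBall_subset_trunc) (isClosed_trunc hcl).isComplete (convex_trunc hconv)
    hε hx
  obtain ⟨w, hw⟩ := hr
  refine ⟨d, fun z hz => inner_nonpos_of_forall_inner_add_smul_le (w := w) (M := ⟪d, x⟫_ℝ - ε)
    fun t ht => ?_, hd1, fun y hy => hdx y (inter_closedBall_subset_trunc hy)⟩
  linarith [hdx _ (add_smul_mem_trunc (inter_closedBall_subset_trunc hw) hz ht)]

end RecessionCone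

open Topology

theorem inner_add_le_suppFun_of_tendsto {n : ℕ} {C : Set (EuclideanSpace ℝ (Fin n))}
    (hcont : ContinuousOn (suppFun C) (suppDom C)) {d : ℕ → EuclideanSpace ℝ (Fin n)}
    {d₀ y : EuclideanSpace ℝ (Fin n)} {ε : ℝ} (hd : ∀ k, d k ∈ suppDom C) (hd₀ : d₀ ∈ suppDom C)
    (hlim : Tendsto d atTop (𝓝 d₀))
    (hev : ∀ᶠ k in atTop, ((⟪d k, y⟫_ℝ + ε : ℝ) : EReal) ≤ suppFun C (d k)) :
    ((⟪d₀, y⟫_ℝ + ε : ℝ) : EReal) ≤ suppFun C d₀ := by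
  have hinner : Tendsto (fun k => ((⟪d k, y⟫_ℝ + ε : ℝ) : EReal)) atTop
      (𝓝 ((⟪d₀, y⟫_ℝ + ε : ℝ) : EReal)) :=
    (continuous_coe_real_ereal.tendsto _).comp ((hlim.inner tendsto_const_nhds).add_const ε)
  have hσ : Tendsto (fun k => suppFun C (d k)) atTop (𝓝 (suppFun C d₀)) :=
    (hcont d₀ hd₀).tendsto.comp (tendsto_nhdsWithin_iff.2 ⟨hlim, .of_forall hd⟩)
  exact le_of_tendsto_of_tendsto hinner hσ hev

theorem suppDom_closed_and_continuousOn_imp_approxMDecomposable_general {n : ℕ}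
    (C : Set (EuclideanSpace ℝ (Fin n)))
    (hcl : IsClosed C) (hconv : Convex ℝ C)
    (hdcl : IsClosed (suppDom C)) (hcont : ContinuousOn (suppFun C) (suppDom C)) :
    ApproxMDecomposable C := by
  obtain rfl | ⟨x₀, hx₀⟩ := C.eq_empty_or_nonempty
  · exact fun _ _ => ⟨1, one_pos, Set.empty_subset _⟩
  intro ε hε
  by_contra! hbad
  set R : ℕ → ℝ := fun k => ‖x₀‖ + k + 1
  have hx₀R : ∀ k, x₀ ∈ C ∩ closedBall 0 (R k) := fun k =>
    ⟨hx₀, mem_closedBall_zero_iff.2 (by simp only [R]; linarith [(k.cast_nonneg : (0 : ℝ) ≤ k)])⟩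
  have hfar : ∀ k, ∃ x ∈ C, x ∉ trunc C (R k) + closedBall 0 ε := fun k =>
    Set.not_subset.1 (hbad (R k) (by positivity))
  choose x hxC hx using hfar
  choose d hd hd1 hdx using fun k => exists_mem_polarCone_recCone_forall_inner_add_le hcl hconv
    ⟨x₀, hx₀R k⟩ hε.le (hx k)
  have hdom : ∀ k, d k ∈ suppDom C := fun k =>
    polarCone_recCone_subset_suppDom hcl hconv hdcl (hd k)
  obtain ⟨d₀, -, φ, hφ, hlim⟩ := (isCompact_sphere (0 : EuclideanSpace ℝ (Fin n)) 1).tendsto_subseq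
    fun k => mem_sphere_zero_iff_norm.2 (hd1 k)
  have hd₀ : d₀ ∈ suppDom C := hdcl.mem_of_tendsto hlim (.of_forall fun k => hdom (φ k))
  obtain ⟨y, hy, hσy⟩ := exists_suppFun_lt_inner_add ⟨x₀, hx₀⟩ hd₀ hε
  refine hσy.not_ge (inner_add_le_suppFun_of_tendsto hcont (fun k => hdom (φ k)) hd₀ hlim ?_)
  filter_upwards [eventually_ge_atTop ⌈‖y‖⌉₊] with k hk
  have hyR : ‖y‖ ≤ R (φ k) := by
    have : (⌈‖y‖⌉₊ : ℝ) ≤ φ k := by exact_mod_cast hk.trans hφ.le_apply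
    simp only [R]
    linarith [Nat.le_ceil ‖y‖, norm_nonneg x₀]
  exact (EReal.coe_le_coe_iff.2 (hdx (φ k) y ⟨hy, mem_closedBall_zero_iff.2 hyR⟩)).trans
    (le_suppFun (hxC (φ k)) _)

/-- if `dom σ_C` is closed and `σ_C` is continuous relative to
`dom σ_C`, then `C` is approximately M-decomposable. -/
theorem suppDom_closed_and_continuousOn_imp_approxMDecomposable {n : ℕ}
    (C : Set (EuclideanSpace ℝ (Fin n)))
    (hne : C.Nonempty) (hcl : IsClosed C) (hconv : Convex ℝ C)
    (hdcl : IsClosed (suppDom C)) (hcont : ContinuousOn (suppFun C) (suppDom C)) :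
    ApproxMDecomposable C :=
  suppDom_closed_and_continuousOn_imp_approxMDecomposable_general C hcl hconv hdcl hcont
end

section
/- Let C ⊆ ℝⁿ be a nonempty closed convex set that is hyperbolic. Then dom σ_C = (rec C)°, the polar cone of the recession cone of C. -/
open scoped InnerProductSpace Pointwise ENNReal
open Metric Filter

/-! A direction `y` of `rec C` with `⟪d, y⟫ > 0` makes `⟪d, ·⟫` unbounded along the ray
`x + t • y ⊆ C`, so `dom σ_C ⊆ (rec C)°` for every nonempty `C`. Conversely, if `C ⊆ M + rec C`
with `M` compact and `d ∈ (rec C)°`, then `⟪d, m + z⟫ ≤ ⟪d, m⟫` for `m ∈ M`, `z ∈ rec C`, and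
`⟪d, ·⟫` is bounded above on the compact set `M`. -/

section

variable {n : ℕ} {C : Set (EuclideanSpace ℝ (Fin n))} {d : EuclideanSpace ℝ (Fin n)}

theorem mem_suppDom_iff_s11 : d ∈ suppDom C ↔ BddAbove ((fun x => ⟪d, x⟫_ℝ) '' C) := by
  constructor
  · intro hd
    obtain ⟨B, hB, -⟩ := EReal.lt_iff_exists_real_btwn.mp hd
    refine ⟨B, ?_⟩
    rintro _ ⟨x, hx, rfl⟩
    exact EReal.coe_le_coe_iff.mp ((le_iSup₂_of_le x hx le_rfl).trans hB.le)
  · rintro ⟨B, hB⟩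
    have hle : suppFun C d ≤ (B : EReal) :=
      iSup₂_le fun x hx => EReal.coe_le_coe_iff.mpr (hB ⟨x, hx, rfl⟩)
    exact hle.trans_lt (EReal.coe_lt_top B)

theorem nonpos_of_forall_add_mul_le {a b B : ℝ} (h : ∀ t : ℝ, 0 ≤ t → a + t * b ≤ B) :
    b ≤ 0 := by
  by_contra! hb
  have key := h ((B - a + 1) / b) (div_nonneg (by linarith [h 0 le_rfl]) hb.le)
  rw [div_mul_cancel₀ _ hb.ne'] at key
  linarith

theorem suppDom_subset_polarCone_recCone (hne : C.Nonempty) :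
    suppDom C ⊆ polarCone (recCone C) := by
  intro d hd y hy
  obtain ⟨B, hB⟩ := mem_suppDom_iff_s11.mp hd
  obtain ⟨x, hx⟩ := hne
  refine nonpos_of_forall_add_mul_le (a := ⟪d, x⟫_ℝ) (B := B) fun t ht => ?_
  have hray : ⟪d, x + t • y⟫_ℝ ≤ B := hB ⟨x + t • y, hy x hx t ht, rfl⟩
  rwa [inner_add_right, real_inner_smul_right] at hray

theorem Hyperbolic.polarCone_recCone_subset_suppDom (h : Hyperbolic C) :
    polarCone (recCone C) ⊆ suppDom C := by
  intro d hd
  obtain ⟨M, hMc, -, hsub⟩ := h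
  obtain ⟨B, hB⟩ := hMc.bddAbove_image (f := fun x => ⟪d, x⟫_ℝ)
    (continuous_const.inner continuous_id).continuousOn
  refine mem_suppDom_iff_s11.mpr ⟨B, ?_⟩
  rintro _ ⟨x, hx, rfl⟩
  obtain ⟨m, hm, z, hz, rfl⟩ := hsub hx
  calc ⟪d, m + z⟫_ℝ = ⟪d, m⟫_ℝ + ⟪d, z⟫_ℝ := inner_add_right d m z
    _ ≤ B + 0 := add_le_add (hB ⟨m, hm, rfl⟩) (hd z hz)
    _ = B := add_zero B

end

theorem hyperbolic_suppDom_eq_polar_recCone_general {n : ℕ}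
    (C : Set (EuclideanSpace ℝ (Fin n)))
    (hne : C.Nonempty)
    (h : Hyperbolic C) :
    suppDom C = polarCone (recCone C) :=
  (suppDom_subset_polarCone_recCone hne).antisymm h.polarCone_recCone_subset_suppDom

/-- if `C` is hyperbolic, then `dom σ_C = (rec C)°`. -/
theorem hyperbolic_suppDom_eq_polar_recCone {n : ℕ}
    (C : Set (EuclideanSpace ℝ (Fin n)))
    (hne : C.Nonempty) (hcl : IsClosed C) (hconv : Convex ℝ C)
    (h : Hyperbolic C) :
    suppDom C = polarCone (recCone C) :=
  hyperbolic_suppDom_eq_polar_recCone_general C hne h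
end
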